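/- Let (θ_n)_{n∈ℕ} be a sequence of real numbers with 0 < θ_n < π/2 for all n and θ_n → 0 as n → ∞. Let C and S be the diagonal operators on K = ℓ²(ℕ) with diagonals (cos θ_n)_n and (sin θ_n)_n respectively, and put H = K ⊕ K, E₁ = K ⊕ 0 and E₂ = {(Cz, Sz) : z ∈ K} (a closed subspace of H). Then the system (H; E₁, E₂) is not boundedly isomorphic to (K ⊕ K; K ⊕ 0, 0 ⊕ K). -/
import Mathlib


/- STATEMENT 11: Let 0 < θₙ < π/2 with θₙ → 0, let C, S be the diagonal operators on
K = ℓ²(ℕ) with diagonals (cos θₙ)ₙ and (sin θₙ)ₙ, and E₂ = {(Cz, Sz) : z ∈ K}. Then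
(K ⊕ K; K ⊕ 0, E₂) is not boundedly isomorphic to (K ⊕ K; K ⊕ 0, 0 ⊕ K). -/

noncomputable section

abbrev K : Type := lp (fun _ : ℕ => ℂ) 2

/-- The subspace {(Cz, Sz) : z ∈ K} of K × K, where C and S are the diagonal operators
with diagonals (cos θₙ)ₙ and (sin θₙ)ₙ. -/
def angleSubspace (θ : ℕ → ℝ) : Submodule ℂ (K × K) where
  carrier := {p | ∃ z : K, (∀ n, p.1 n = (Real.cos (θ n) : ℂ) * z n) ∧
    (∀ n, p.2 n = (Real.sin (θ n) : ℂ) * z n)}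
  add_mem' := by
    rintro p q ⟨z, hz1, hz2⟩ ⟨w, hw1, hw2⟩
    refine ⟨z + w, fun n => ?_, fun n => ?_⟩ <;>
      · simp only [Prod.fst_add, Prod.snd_add, lp.coeFn_add, Pi.add_apply,
          hz1 n, hz2 n, hw1 n, hw2 n]
        ring
  zero_mem' := ⟨0, fun n => by simp [lp.coeFn_zero], fun n => by simp [lp.coeFn_zero]⟩
  smul_mem' := by
    rintro c p ⟨z, hz1, hz2⟩
    refine ⟨c • z, fun n => ?_, fun n => ?_⟩ <;>
      · simp only [Prod.smul_fst, Prod.smul_snd, lp.coeFn_smul, Pi.smul_apply,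
          hz1 n, hz2 n, smul_eq_mul]
        ring

theorem angle_subspace_not_boundedly_isomorphic_to_orthogonal_pair
    (θ : ℕ → ℝ) (hθ : ∀ n, 0 < θ n ∧ θ n < Real.pi / 2)
    (hθlim : Filter.Tendsto θ Filter.atTop (nhds 0)) :
    ¬ ∃ V : (K × K) ≃L[ℂ] (K × K),
        V '' (((⊤ : Submodule ℂ K).prod (⊥ : Submodule ℂ K)) : Set (K × K)) =
          (((⊤ : Submodule ℂ K).prod (⊥ : Submodule ℂ K)) : Set (K × K)) ∧
        V '' ((angleSubspace θ) : Set (K × K)) =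
          (((⊥ : Submodule ℂ K).prod (⊤ : Submodule ℂ K)) : Set (K × K)) := by
  rintro ⟨V, hV1, hV2⟩
  classical
  -- extract a subsequence along which θ is small
  obtain ⟨φ, hφ, hφθ⟩ := Filter.extraction_forall_of_eventually'
    (P := fun k n => θ n < 1 / (k + 1))
    (fun k => Filter.eventually_atTop.mp
      (hθlim.eventually (eventually_lt_nhds (by positivity))))
  have hsin_pos : ∀ n, 0 < Real.sin (θ n) := fun n =>
    Real.sin_pos_of_pos_of_lt_pi (hθ n).1 (lt_trans (hθ n).2 (by linarith [Real.pi_pos]))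
  set yfun : ℕ → ℂ := fun n => if n ∈ Set.range φ then ((Real.sin (θ n) : ℝ) : ℂ) else 0
    with hyfun
  have h2r : ((2 : ENNReal)).toReal = ((2 : ℕ) : ℝ) := by norm_num
  have hsum : Summable fun n => ‖yfun n‖ ^ (2 : ENNReal).toReal := by
    have h0 : ∀ x ∉ Set.range φ, ‖yfun x‖ ^ (2 : ENNReal).toReal = 0 := by
      intro x hx
      rw [hyfun]
      simp only [if_neg hx, norm_zero]
      rw [h2r, Real.rpow_natCast]
      norm_num
    refine (hφ.injective.summable_iff h0).mp ?_
    have hb : Summable fun k : ℕ => (1 / ((k : ℝ) + 1)) ^ 2 := by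
      have := (summable_nat_add_iff (f := fun n : ℕ => 1 / (n : ℝ) ^ 2) 1).mpr
        (Real.summable_one_div_nat_pow.mpr one_lt_two)
      refine this.congr fun k => ?_
      push_cast
      rw [div_pow, one_pow]
    refine hb.of_nonneg_of_le (fun k => Real.rpow_nonneg (norm_nonneg _) _) (fun k => ?_)
    show ‖yfun (φ k)‖ ^ (2 : ENNReal).toReal ≤ (1 / ((k : ℝ) + 1)) ^ 2
    rw [hyfun]
    simp only [if_pos (Set.mem_range_self k), Complex.norm_real]
    rw [h2r, Real.rpow_natCast]
    have h1 : Real.sin (θ (φ k)) ≤ 1 / ((k : ℝ) + 1) :=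
      le_trans (Real.sin_le (hθ (φ k)).1.le) (hφθ k).le
    have h2 : ‖Real.sin (θ (φ k))‖ = Real.sin (θ (φ k)) :=
      Real.norm_of_nonneg (hsin_pos (φ k)).le
    rw [h2]
    exact pow_le_pow_left₀ (hsin_pos (φ k)).le h1 2
  set y : K := ⟨yfun, memℓp_gen hsum⟩ with hy_def
  -- the sup of the two subspaces is everything
  set e : (K × K) ≃ₗ[ℂ] (K × K) := V.toLinearEquiv with he
  have h1 : Submodule.map (e : (K × K) →ₗ[ℂ] (K × K)) ((⊤ : Submodule ℂ K).prod ⊥) =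
      (⊤ : Submodule ℂ K).prod ⊥ :=
    SetLike.coe_injective (by rw [Submodule.map_coe]; exact hV1)
  have h2 : Submodule.map (e : (K × K) →ₗ[ℂ] (K × K)) (angleSubspace θ) =
      (⊥ : Submodule ℂ K).prod ⊤ :=
    SetLike.coe_injective (by rw [Submodule.map_coe]; exact hV2)
  have htop' : Submodule.map (e : (K × K) →ₗ[ℂ] (K × K))
      (((⊤ : Submodule ℂ K).prod ⊥) ⊔ angleSubspace θ) = ⊤ := by
    rw [Submodule.map_sup, h1, h2, Submodule.prod_sup_prod, sup_bot_eq, bot_sup_eq,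
      Submodule.prod_top]
  have htop : ((⊤ : Submodule ℂ K).prod ⊥) ⊔ angleSubspace θ = ⊤ := by
    refine Submodule.map_injective_of_injective (f := (e : (K × K) →ₗ[ℂ] (K × K)))
      e.injective ?_
    rw [htop', Submodule.map_top]
    exact (LinearMap.range_eq_top.mpr e.surjective).symm
  have hmem : ((0 : K), y) ∈ ((⊤ : Submodule ℂ K).prod ⊥) ⊔ angleSubspace θ :=
    htop ▸ Submodule.mem_top
  obtain ⟨p, hp, q, hq, hpq⟩ := Submodule.mem_sup.mp hmem
  obtain ⟨z, hz1, hz2⟩ := hq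
  have hp2 : p.2 = 0 := (Submodule.mem_prod.mp hp).2
  have hq2 : q.2 = y := by
    have h := congrArg Prod.snd hpq
    simpa [hp2] using h
  have hyz : ∀ n, yfun n = (Real.sin (θ n) : ℂ) * z n := by
    intro n
    have h := hz2 n
    rw [hq2] at h
    exact h
  have hz1' : ∀ k, z (φ k) = 1 := by
    intro k
    have h := hyz (φ k)
    rw [hyfun] at h
    simp only [if_pos (Set.mem_range_self k)] at h
    have hne : ((Real.sin (θ (φ k)) : ℝ) : ℂ) ≠ 0 := by
      exact_mod_cast (hsin_pos (φ k)).ne'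
    have h' : ((Real.sin (θ (φ k)) : ℝ) : ℂ) * 1 = ((Real.sin (θ (φ k)) : ℝ) : ℂ) * z (φ k) := by
      rw [mul_one]; exact h
    exact (mul_left_cancel₀ hne h').symm
  have hzsum : Summable fun n => ‖z n‖ ^ (2 : ENNReal).toReal :=
    (memℓp_gen_iff (by norm_num)).mp (lp.memℓp z)
  have ht : Filter.Tendsto (fun k => ‖z (φ k)‖ ^ (2 : ENNReal).toReal) Filter.atTop (nhds 0) :=
    hzsum.tendsto_atTop_zero.comp hφ.tendsto_atTop
  have ht' : (fun k => ‖z (φ k)‖ ^ (2 : ENNReal).toReal) = fun _ => (1 : ℝ) := by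
    funext k
    rw [hz1' k]
    simp
  rw [ht'] at ht
  exact zero_ne_one (tendsto_nhds_unique ht tendsto_const_nhds)


end
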